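/- Let 1 ≤ L ≤ N and for 1 ≤ j ≤ L define the Jordan–Wigner operator a_j ∈ M_(2^N)(ℂ) as the Kronecker product a_j = Z^{⊗(j−1)} ⊗ σ⁻ ⊗ I₂^{⊗(N−j)}, where Z = diag(1,−1) and σ⁻ is the 2×2 matrix with (σ⁻)_{0,1} = 1 and all other entries 0. Then the smallest linear subspace of M_(2^N)(ℂ) that contains {a_j : 1 ≤ j ≤ L} and is closed under matrix multiplication and conjugate transpose equals { X ⊗ I_(2^{N−L}) : X ∈ M_(2^L)(ℂ) }. In particular, every operator of the form U ⊗ I_(2^{N−L}) is generated by the field operators of the first L modes, i.e., it is local on the first L modes. -/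

import Mathlib

/-!
Split off the first mode, `(ℂ²)^{⊗(m+1)} ≅ ℂ² ⊗ (ℂ²)^{⊗m}`. The Jordan–Wigner string gives
`a₀ = σ⁻ ⊗ 1` and `a_{j+1} = Z ⊗ a_j`. Since `σ⁻` generates `M₂(ℂ)` as a ⋆-algebra, the `a`'s
generate `M₂(ℂ) ⊗ 1`, which contains `Z ⊗ 1`, hence also `(Z ⊗ 1) a_{j+1} = 1 ⊗ a_j`; by induction
they then generate `1 ⊗ M_{2^m}(ℂ)` and so everything. The unit is `a₀ a₀* + a₀* a₀`, so already
the non-unital ⋆-algebra they generate is everything. Finally `X ↦ X ⊗ I` is a ⋆-homomorphism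
sending the `a_j` on `L` modes to the `a_j` on `N` modes, so the ⋆-algebra generated by the
first `L` of them is its range.
-/

open Matrix
open scoped ComplexOrder

noncomputable section

abbrev BitStr (N : ℕ) := Fin N → Fin 2

/-- The Jordan–Wigner representative `a_j = Z^{⊗(j−1)} ⊗ σ⁻ ⊗ I₂^{⊗(N−j)}` of the `j`-th
fermionic annihilation operator, as a matrix on `(ℂ²)^{⊗N}` indexed by bit strings:
its `(s,t)` entry is `Π_{i<j} (−1)^{s_i}` when `s j = 0`, `t j = 1` and `s i = t i`
for all `i ≠ j`, and `0` otherwise. -/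
def jwOp (N : ℕ) (j : Fin N) : Matrix (BitStr N) (BitStr N) ℂ :=
  Matrix.of fun s t =>
    if (∀ i, i ≠ j → s i = t i) ∧ s j = 0 ∧ t j = 1 then
      ∏ i ∈ Finset.univ.filter (fun i : Fin N => (i : ℕ) < (j : ℕ)), (-1 : ℂ) ^ (s i : ℕ)
    else 0

open scoped Kronecker

namespace Fin

variable {m : ℕ}

theorem prod_Iio_succ {M : Type*} [CommMonoid M] (f : Fin (m + 1) → M) (j : Fin m) :
    ∏ i < j.succ, f i = f 0 * ∏ i < j, f i.succ := by
  simp only [← Finset.filter_gt_eq_Iio, Finset.prod_filter, Fin.prod_univ_succ,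
    Fin.succ_lt_succ_iff, if_pos (Fin.succ_pos j)]

def splitAtEquiv {α : Type*} {L N : ℕ} (h : L ≤ N) :
    (Fin N → α) ≃ (Fin L → α) × ({i : Fin N // L ≤ (i : ℕ)} → α) where
  toFun s := (fun k => s (Fin.castLE h k), fun i => s i)
  invFun p i := if hi : (i : ℕ) < L then p.1 ⟨i, hi⟩ else p.2 ⟨i, not_lt.mp hi⟩
  left_inv s := by
    funext i
    dsimp only
    split <;> rfl
  right_inv p := by
    ext k
    · simp
    · simp [not_lt.mpr k.2]

end Fin

namespace Matrix

variable {R : Type*} [CommSemiring R] [StarRing R]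
  {ι α β : Type*} [Fintype ι] [DecidableEq ι] [Fintype α] [DecidableEq α]
  [Fintype β] [DecidableEq β]

def kroneckerIncludeLeft (e : ι ≃ α × β) : Matrix α α R →⋆ₐ[R] Matrix ι ι R where
  toFun X := (X ⊗ₖ (1 : Matrix β β R)).submatrix e e
  map_one' := by simp only [one_kronecker_one, submatrix_one_equiv]
  map_mul' X Y := by simp only [submatrix_mul_equiv, ← mul_kronecker_mul, mul_one]
  map_zero' := by simp
  map_add' X Y := by rw [add_kronecker]; rfl
  commutes' r := by
    ext s t
    simp only [Algebra.algebraMap_eq_smul_one, smul_kronecker, one_kronecker_one, submatrix_apply,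
      smul_apply, one_apply, e.injective.eq_iff]
  map_star' X := by
    simp only [star_eq_conjTranspose, conjTranspose_kronecker, conjTranspose_one,
      conjTranspose_submatrix]

def kroneckerIncludeRight (e : ι ≃ α × β) : Matrix β β R →⋆ₐ[R] Matrix ι ι R :=
  kroneckerIncludeLeft (e.trans (Equiv.prodComm α β))

theorem kroneckerIncludeLeft_apply (e : ι ≃ α × β) (X : Matrix α α R) :
    kroneckerIncludeLeft e X = (X ⊗ₖ (1 : Matrix β β R)).submatrix e e := rfl

theorem kroneckerIncludeRight_apply (e : ι ≃ α × β) (Y : Matrix β β R) :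
    kroneckerIncludeRight e Y = ((1 : Matrix α α R) ⊗ₖ Y).submatrix e e := by
  ext s t
  simp [kroneckerIncludeRight, kroneckerIncludeLeft_apply, mul_comm, one_apply]

theorem kroneckerIncludeLeft_mul_kroneckerIncludeRight (e : ι ≃ α × β) (X : Matrix α α R)
    (Y : Matrix β β R) :
    kroneckerIncludeLeft e X * kroneckerIncludeRight e Y = (X ⊗ₖ Y).submatrix e e := by
  rw [kroneckerIncludeLeft_apply, kroneckerIncludeRight_apply, submatrix_mul_equiv,
    ← mul_kronecker_mul, mul_one, one_mul]

theorem sup_range_kroneckerInclude (e : ι ≃ α × β) :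
    (kroneckerIncludeLeft (R := R) e).range ⊔ (kroneckerIncludeRight e).range = ⊤ := by
  refine eq_top_iff.2 fun M _ => ?_
  rw [matrix_eq_sum_single M]
  refine sum_mem fun s _ => sum_mem fun t _ => ?_
  have hst : single s t (1 : R) = kroneckerIncludeLeft e (single (e s).1 (e t).1 1) *
      kroneckerIncludeRight e (single (e s).2 (e t).2 1) := by
    rw [kroneckerIncludeLeft_mul_kroneckerIncludeRight, single_kronecker_single, mul_one,
      submatrix_single_equiv]
    simp
  rw [← mul_one (M s t), ← smul_eq_mul, ← smul_single, hst]
  exact SMulMemClass.smul_mem _ <| StarSubalgebra.mul_mem_sup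
    ⟨single (e s).1 (e t).1 1, rfl⟩ ⟨single (e s).2 (e t).2 1, rfl⟩

theorem kroneckerIncludeLeft_splitAtEquiv_apply {σ : Type*} [Fintype σ] [DecidableEq σ]
    {L N : ℕ} (h : L ≤ N) (X : Matrix (Fin L → σ) (Fin L → σ) R) (s t : Fin N → σ) :
    kroneckerIncludeLeft (Fin.splitAtEquiv h) X s t =
      if ∀ i : Fin N, L ≤ (i : ℕ) → s i = t i then
        X (fun k => s (Fin.castLE h k)) (fun k => t (Fin.castLE h k))
      else 0 := by
  simp [kroneckerIncludeLeft_apply, Fin.splitAtEquiv, one_apply, funext_iff]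

end Matrix

theorem NonUnitalStarAlgebra.coe_adjoin_of_one_mem {R A : Type*} [CommSemiring R] [StarRing R]
    [Semiring A] [StarRing A] [Algebra R A] [StarModule R A] {s : Set A}
    (h1 : 1 ∈ NonUnitalStarAlgebra.adjoin R s) :
    (NonUnitalStarAlgebra.adjoin R s : Set A) = StarAlgebra.adjoin R s := by
  refine subset_antisymm (NonUnitalStarAlgebra.adjoin_le_starAlgebra_adjoin R s) fun x hx => ?_
  have hspan := StarAlgebra.adjoin_nonUnitalStarSubalgebra_eq_span
    (NonUnitalStarAlgebra.adjoin R s)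
  rw [StarAlgebra.adjoin_nonUnitalStarSubalgebra] at hspan
  have hx' : x ∈ Submodule.span R {1} ⊔ (NonUnitalStarAlgebra.adjoin R s).toSubmodule :=
    hspan ▸ hx
  exact sup_le (Submodule.span_le.2 (Set.singleton_subset_iff.2 h1)) le_rfl hx'

namespace JordanWigner

section SigmaMinus

variable (R : Type*) [CommSemiring R] [StarRing R]

def sigmaMinus : Matrix (Fin 2) (Fin 2) R := single 0 1 1

theorem star_sigmaMinus : star (sigmaMinus R) = single 1 0 1 := by
  rw [sigmaMinus, star_eq_conjTranspose, conjTranspose_single, star_one]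

theorem adjoin_sigmaMinus_eq_top : StarAlgebra.adjoin R {sigmaMinus R} = ⊤ := by
  have hσ : sigmaMinus R ∈ StarAlgebra.adjoin R {sigmaMinus R} :=
    StarAlgebra.subset_adjoin R _ rfl
  have hunit (i j : Fin 2) : single i j (1 : R) ∈ StarAlgebra.adjoin R {sigmaMinus R} := by
    fin_cases i <;> fin_cases j
    · have h := mul_mem hσ (star_mem hσ)
      rwa [star_sigmaMinus, sigmaMinus, single_mul_single_same, mul_one] at h
    · exact hσ
    · simpa [star_sigmaMinus] using star_mem hσ
    · have h := mul_mem (star_mem hσ) hσ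
      rwa [star_sigmaMinus, sigmaMinus, single_mul_single_same, mul_one] at h
  rw [eq_top_iff]
  intro M _
  rw [matrix_eq_sum_single M]
  refine sum_mem fun i _ => sum_mem fun j _ => ?_
  rw [← mul_one (M i j), ← smul_eq_mul, ← smul_single]
  exact SMulMemClass.smul_mem _ (hunit i j)

theorem sigmaMinus_mul_star_add_star_mul :
    sigmaMinus R * star (sigmaMinus R) + star (sigmaMinus R) * sigmaMinus R = 1 := by
  ext i j
  fin_cases i <;> fin_cases j <;> simp [sigmaMinus, one_apply]

end SigmaMinus

def pauliZ : Matrix (Fin 2) (Fin 2) ℂ := diagonal fun b => (-1) ^ (b : ℕ)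

theorem pauliZ_mul_self : pauliZ * pauliZ = 1 := by
  rw [pauliZ, diagonal_mul_diagonal, ← diagonal_one]
  congr 1
  funext b
  rw [← pow_add, ← two_mul, pow_mul, neg_one_sq, one_pow]

theorem jwOp_apply {N : ℕ} (j : Fin N) (s t : BitStr N) :
    jwOp N j s t =
      if (∀ i, i ≠ j → s i = t i) ∧ s j = 0 ∧ t j = 1 then ∏ i < j, (-1 : ℂ) ^ (s i : ℕ)
      else 0 := by
  rw [jwOp, of_apply, ← Finset.filter_gt_eq_Iio]
  simp only [Fin.lt_def]

theorem kroneckerIncludeLeft_splitAtEquiv_jwOp {L N : ℕ} (h : L ≤ N) (j : Fin L) :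
    kroneckerIncludeLeft (Fin.splitAtEquiv h) (jwOp L j) = jwOp N (Fin.castLE h j) := by
  ext s t
  rw [kroneckerIncludeLeft_splitAtEquiv_apply, jwOp_apply, jwOp_apply, Fin.prod_Iio_castLE]
  have hsplit : (∀ i, i ≠ Fin.castLE h j → s i = t i) ↔
      (∀ k, k ≠ j → s (Fin.castLE h k) = t (Fin.castLE h k)) ∧
        ∀ i : Fin N, L ≤ (i : ℕ) → s i = t i := by
    constructor
    · intro hst
      refine ⟨fun k hk => hst _ ((Fin.castLE_injective h).ne hk), fun i hi => hst i ?_⟩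
      rintro rfl
      exact absurd hi (not_le.mpr j.2)
    · rintro ⟨hhead, htail⟩ i hi
      rcases lt_or_ge (i : ℕ) L with hiL | hiL
      · exact hhead ⟨i, hiL⟩ (fun hk => hi (by rw [← hk]; rfl))
      · exact htail i hiL
  simp only [hsplit]
  split_ifs <;> tauto

section FirstMode

variable {m : ℕ}

def consSplit (m : ℕ) : BitStr (m + 1) ≃ Fin 2 × BitStr m := (Fin.consEquiv fun _ => Fin 2).symm

theorem jwOp_zero : jwOp (m + 1) 0 = kroneckerIncludeLeft (consSplit m) (sigmaMinus ℂ) := by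
  ext s t
  simp [jwOp_apply, kroneckerIncludeLeft_apply, consSplit, sigmaMinus, single_apply, one_apply,
    Fin.forall_fin_succ, funext_iff, Fin.tail]
  split_ifs <;> tauto

theorem jwOp_succ (j : Fin m) :
    jwOp (m + 1) j.succ =
      kroneckerIncludeLeft (consSplit m) pauliZ * kroneckerIncludeRight (consSplit m) (jwOp m j) := by
  ext s t
  rw [kroneckerIncludeLeft_mul_kroneckerIncludeRight]
  simp only [jwOp_apply, consSplit, pauliZ, diagonal_apply, submatrix_apply, kroneckerMap_apply,
    Fin.consEquiv_symm_apply, Fin.prod_Iio_succ]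
  have hcond : ((∀ i, i ≠ j.succ → s i = t i) ∧ s j.succ = 0 ∧ t j.succ = 1) ↔
      s 0 = t 0 ∧ ((∀ i, i ≠ j → Fin.tail s i = Fin.tail t i) ∧
        Fin.tail s j = 0 ∧ Fin.tail t j = 1) := by
    simp only [Fin.forall_fin_succ, ne_eq, (Fin.succ_ne_zero j).symm, not_false_eq_true,
      forall_const, Fin.succ_inj, Fin.tail, and_assoc]
  by_cases h0 : s 0 = t 0
  · simp only [hcond, h0, true_and, if_true, mul_ite, mul_zero]
    rfl
  · simp only [hcond, h0, false_and, if_false, zero_mul]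

end FirstMode

theorem adjoin_range_jwOp_eq_top (m : ℕ) : StarAlgebra.adjoin ℂ (Set.range (jwOp m)) = ⊤ := by
  induction m with
  | zero =>
    rw [eq_top_iff]
    intro X _
    have hX : X = algebraMap ℂ _ (X default default) := by
      ext s t
      rw [Subsingleton.elim s default, Subsingleton.elim t default, algebraMap_matrix_apply,
        if_pos rfl]
      rfl
    rw [hX]
    exact algebraMap_mem _ _
  | succ m ih =>
    let e := consSplit m
    have hleft :
        (kroneckerIncludeLeft e).range ≤ StarAlgebra.adjoin ℂ (Set.range (jwOp (m + 1))) := by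
      rw [StarAlgHom.range_eq_map_top, ← adjoin_sigmaMinus_eq_top, StarAlgHom.map_adjoin,
        Set.image_singleton, ← jwOp_zero]
      exact StarAlgebra.adjoin_le
        (Set.singleton_subset_iff.2 (StarAlgebra.subset_adjoin ℂ _ ⟨0, rfl⟩))
    have hright :
        (kroneckerIncludeRight e).range ≤ StarAlgebra.adjoin ℂ (Set.range (jwOp (m + 1))) := by
      rw [StarAlgHom.range_eq_map_top, ← ih, StarAlgHom.map_adjoin]
      refine StarAlgebra.adjoin_le ?_
      rintro _ ⟨_, ⟨j, rfl⟩, rfl⟩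
      have hj : kroneckerIncludeRight e (jwOp m j) =
          kroneckerIncludeLeft e pauliZ * jwOp (m + 1) j.succ := by
        rw [jwOp_succ, ← mul_assoc, ← map_mul, pauliZ_mul_self, map_one, one_mul]
      rw [hj]
      exact mul_mem (hleft ⟨_, rfl⟩) (StarAlgebra.subset_adjoin ℂ _ ⟨_, rfl⟩)
    rw [eq_top_iff, ← sup_range_kroneckerInclude e]
    exact sup_le hleft hright

theorem one_mem_adjoin_range_jwOp (m : ℕ) :
    1 ∈ NonUnitalStarAlgebra.adjoin ℂ (Set.range (jwOp (m + 1))) := by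
  have ha := NonUnitalStarAlgebra.subset_adjoin ℂ (Set.range (jwOp (m + 1))) ⟨0, rfl⟩
  have h := add_mem (mul_mem ha (star_mem ha)) (mul_mem (star_mem ha) ha)
  rwa [jwOp_zero, ← map_star, ← map_mul, ← map_mul, ← map_add,
    sigmaMinus_mul_star_add_star_mul, map_one] at h

end JordanWigner

open JordanWigner in
/-- The smallest linear subspace of `M_{2^N}(ℂ)` containing the Jordan–Wigner operators
`a₁, …, a_L` and closed under matrix multiplication and conjugate transpose (i.e. the
non-unital star subalgebra they generate) is exactly `{X ⊗ I_{2^{N−L}}}`: the set of matrices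
acting nontrivially only on the first `L` modes. -/
theorem jordan_wigner_locality (L N : ℕ) (hL : 1 ≤ L) (hLN : L ≤ N) :
    (NonUnitalStarAlgebra.adjoin ℂ
        (Set.range fun j : Fin L => jwOp N (Fin.castLE hLN j)) :
        Set (Matrix (BitStr N) (BitStr N) ℂ))
      = {Y | ∃ X : Matrix (BitStr L) (BitStr L) ℂ, ∀ s t : BitStr N,
          Y s t =
            if ∀ i : Fin N, L ≤ (i : ℕ) → s i = t i then
              X (fun k => s (Fin.castLE hLN k)) (fun k => t (Fin.castLE hLN k))
            else 0} := by
  obtain ⟨m, rfl⟩ : ∃ m, L = m + 1 := ⟨L - 1, by omega⟩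
  have hgen : (NonUnitalStarAlgebra.adjoin ℂ (Set.range (jwOp (m + 1))) :
      Set (Matrix (BitStr (m + 1)) (BitStr (m + 1)) ℂ)) = Set.univ := by
    rw [NonUnitalStarAlgebra.coe_adjoin_of_one_mem (one_mem_adjoin_range_jwOp m),
      adjoin_range_jwOp_eq_top, StarSubalgebra.coe_top]
  have himage : (Set.range fun j => jwOp N (Fin.castLE hLN j)) =
      kroneckerIncludeLeft (Fin.splitAtEquiv hLN) '' Set.range (jwOp (m + 1)) := by
    rw [← Set.range_comp]
    exact congrArg Set.range (funext fun j => (kroneckerIncludeLeft_splitAtEquiv_jwOp hLN j).symm)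
  rw [himage, ← NonUnitalStarAlgHom.map_adjoin, NonUnitalStarSubalgebra.coe_map, hgen,
    Set.image_univ]
  ext Y
  simp only [Set.mem_range, Set.mem_ofPred_eq, ← kroneckerIncludeLeft_splitAtEquiv_apply,
    Matrix.ext_iff, eq_comm]
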